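/- arXiv:1907.01258 — 4 statements merged into one kernel-verified Lean document; each statement's English description precedes it below -/
import Mathlib

section
/- For any positive integers k ≤ N and any integers 0 < y₁ < y₂ < ⋯ < y_k ≤ N, the sum ⌈log₂(y₁+1)⌉ + ⌈log₂(y₂−y₁+1)⌉ + ⋯ + ⌈log₂(y_k−y_{k−1}+1)⌉ + k is at most k·log₂(N/k + 1) + 2k. -/
/-!
Bound each ceiling by `logb 2 z + 1` with `zᵢ = yᵢ₊₁ - yᵢ + 1`. The `zᵢ` sum to at most `N + k`,
so by Jensen's inequality for the concave logarithm `∑ logb 2 zᵢ ≤ k · logb 2 ((N + k) / k)`.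
-/

open Real Finset

theorem sum_log_le_card_mul_log {ι : Type*} {s : Finset ι} {z : ι → ℝ} {A : ℝ}
    (hz : ∀ i ∈ s, 0 < z i) (hsum : ∑ i ∈ s, z i ≤ #s * A) :
    ∑ i ∈ s, log (z i) ≤ #s * log A := by
  rcases s.eq_empty_or_nonempty with rfl | hs
  · simp
  have hcard : (0 : ℝ) < #s := by exact_mod_cast hs.card_pos
  have jensen : ∑ i ∈ s, (#s : ℝ)⁻¹ • log (z i) ≤ log (∑ i ∈ s, (#s : ℝ)⁻¹ • z i) :=
    strictConcaveOn_log_Ioi.concaveOn.le_map_sum (fun _ _ => by positivity)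
      (by simp [hcard.ne']) hz
  have hmean : ∑ i ∈ s, (#s : ℝ)⁻¹ • z i ≤ A := by
    rw [← smul_sum, smul_eq_mul, inv_mul_le_iff₀ hcard]
    exact hsum
  rw [← smul_sum, smul_eq_mul, inv_mul_le_iff₀ hcard] at jensen
  calc ∑ i ∈ s, log (z i) ≤ #s * log (∑ i ∈ s, (#s : ℝ)⁻¹ • z i) := jensen
    _ ≤ #s * log A := by
      gcongr
      exact sum_pos (fun i hi => by simpa [hcard] using hz i hi) hs

theorem sum_logb_le_card_mul_logb {ι : Type*} {s : Finset ι} {z : ι → ℝ} {A b : ℝ}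
    (hb : 1 ≤ b) (hz : ∀ i ∈ s, 0 < z i) (hsum : ∑ i ∈ s, z i ≤ #s * A) :
    ∑ i ∈ s, logb b (z i) ≤ #s * logb b A := by
  simp only [logb, ← sum_div, ← mul_div_assoc]
  exact div_le_div_of_nonneg_right (sum_log_le_card_mul_log hz hsum) (log_nonneg hb)

theorem sum_range_tsub_add_one_add {y : ℕ → ℕ} {k : ℕ} (hmono : ∀ i < k, y i ≤ y (i + 1)) :
    ∑ i ∈ range k, (y (i + 1) - y i + 1) + y 0 = y k + k := by
  induction k with
  | zero => simp
  | succ k ih =>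
    have := ih fun i hi => hmono i (by omega)
    have := hmono k (by omega)
    rw [sum_range_succ]
    omega

theorem stmt0_general (N k : ℕ) (hk : 0 < k) (y : ℕ → ℕ)
    (hmono : ∀ i < k, y i < y (i + 1)) (hyN : y k ≤ N) :
    (∑ i ∈ Finset.range k, (⌈Real.logb 2 ((y (i + 1) - y i + 1 : ℕ) : ℝ)⌉ : ℝ)) + k
      ≤ k * Real.logb 2 ((N : ℝ) / k + 1) + 2 * k := by
  set z : ℕ → ℝ := fun i => ((y (i + 1) - y i + 1 : ℕ) : ℝ)
  have hsum : ∑ i ∈ range k, z i ≤ #(range k) * ((N : ℝ) / k + 1) := by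
    have hk' : (k : ℝ) ≠ 0 := by positivity
    rw [card_range, mul_add, mul_div_cancel₀ _ hk', mul_one]
    have := sum_range_tsub_add_one_add fun i hi => (hmono i hi).le
    simp only [z, ← Nat.cast_sum]
    exact_mod_cast (by omega : ∑ i ∈ range k, (y (i + 1) - y i + 1) ≤ N + k)
  have hlog := sum_logb_le_card_mul_logb one_le_two (fun i _ => by positivity) hsum
  rw [card_range] at hlog
  calc (∑ i ∈ range k, (⌈logb 2 (z i)⌉ : ℝ)) + k ≤ (∑ i ∈ range k, (logb 2 (z i) + 1)) + k := by
        gcongr with i; exact (Int.ceil_lt_add_one _).le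
    _ ≤ k * logb 2 ((N : ℝ) / k + 1) + 2 * k := by
        rw [sum_add_distrib, sum_const, card_range, nsmul_one]; linarith

/-- Basic encoding size bound: for `0 = y 0 < y 1 < ⋯ < y k ≤ N`, the sum
`∑ ⌈log₂(y(i+1) − y i + 1)⌉ + k` is at most `k·log₂(N/k + 1) + 2k`. -/
theorem stmt0 (N k : ℕ) (hk : 0 < k) (hkN : k ≤ N) (y : ℕ → ℕ)
    (hy0 : y 0 = 0) (hmono : ∀ i < k, y i < y (i + 1)) (hyN : y k ≤ N) :
    (∑ i ∈ Finset.range k, (⌈Real.logb 2 ((y (i + 1) - y i + 1 : ℕ) : ℝ)⌉ : ℝ)) + k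
      ≤ k * Real.logb 2 ((N : ℝ) / k + 1) + 2 * k :=
  stmt0_general N k hk y hmono hyN
end

section
/- For any positive integers k ≤ N, the sum over l = 0, 1, …, ⌊log₂ k⌋ of (2^l · log₂((N + 2^l)/2^l) + 2^{l+1}) is at most 2k·log₂(N/k + 1) + 8k. -/
/-!
Let `n = ⌊log₂ k⌋ + 1`, so that `2ⁿ⁻¹ ≤ k < 2ⁿ`. For `l < n` the argument of the `l`-th
logarithm is `N / 2ˡ + 1 ≤ (N / k + 1) · 2ⁿ⁻ˡ`, so the `l`-th summand is at most
`2ˡ log₂(N/k + 1) + 2ˡ (n - l) + 2ˡ⁺¹`. Summing, the geometric sums contribute `2ⁿ ≤ 2k` copies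
of `log₂(N/k + 1)` and `2ⁿ⁺¹ ≤ 4k`, while `∑ 2ˡ (n - l) = 2ⁿ ∑ j / 2ʲ ≤ 2ⁿ⁺¹ ≤ 4k`.
-/

open Finset Real

lemma sum_range_two_pow_mul_sub (n : ℕ) :
    ∑ l ∈ range n, (2 : ℝ) ^ l * (n - l) = 2 ^ (n + 1) - n - 2 := by
  induction n with
  | zero => norm_num
  | succ n ih =>
    have hsplit : ∀ l ∈ range (n + 1), (2 : ℝ) ^ l * ((n + 1 : ℕ) - l)
        = 2 ^ l * (n - l) + 2 ^ l := fun l _ => by push_cast; ring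
    rw [sum_congr rfl hsplit, sum_add_distrib, sum_range_succ, ih,
      geom_sum_eq (by norm_num : (2 : ℝ) ≠ 1)]
    push_cast
    ring

lemma add_div_le_div_add_one_mul {x a b k : ℝ} (hx : 0 ≤ x) (ha : 0 < a) (hk : 0 < k)
    (hab : a ≤ b) (hkb : k ≤ b) : (x + a) / a ≤ (x / k + 1) * (b / a) := by
  have hxk : x ≤ x / k * b := by
    rw [div_mul_eq_mul_div, le_div_iff₀ hk]
    exact mul_le_mul_of_nonneg_left hkb hx
  rw [add_mul, one_mul, ← mul_div_assoc, ← add_div, div_le_div_iff_of_pos_right ha]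
  linarith

lemma logb_add_two_pow_div_two_pow_le {x k : ℝ} {l n : ℕ} (hx : 0 ≤ x) (hk : 0 < k)
    (hkn : k ≤ 2 ^ n) (hln : l ≤ n) :
    logb 2 ((x + 2 ^ l) / 2 ^ l) ≤ logb 2 (x / k + 1) + (n - l) := by
  have hpow : (2 : ℝ) ^ l ≤ 2 ^ n := pow_le_pow_right₀ one_le_two hln
  calc logb 2 ((x + 2 ^ l) / 2 ^ l)
      ≤ logb 2 ((x / k + 1) * (2 ^ n / 2 ^ l)) :=
        logb_le_logb_of_le one_lt_two (by positivity)
          (add_div_le_div_add_one_mul hx (by positivity) hk hpow hkn)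
    _ = logb 2 (x / k + 1) + (n - l) := by
        rw [logb_mul (by positivity) (by positivity), logb_div (by positivity) (by positivity),
          logb_pow, logb_pow, logb_self_eq_one one_lt_two]
        ring

theorem stmt1_general (N k : ℕ) (hk : 0 < k) :
    ∑ l ∈ Finset.range (Nat.log 2 k + 1),
        ((2 : ℝ) ^ l * Real.logb 2 (((N : ℝ) + 2 ^ l) / 2 ^ l) + 2 ^ (l + 1))
      ≤ 2 * k * Real.logb 2 ((N : ℝ) / k + 1) + 8 * k := by
  set n := Nat.log 2 k + 1
  set L := logb 2 ((N : ℝ) / k + 1)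
  have hk0 : (0 : ℝ) < k := by exact_mod_cast hk
  have hkn : (k : ℝ) ≤ 2 ^ n := by exact_mod_cast (Nat.lt_pow_succ_log_self one_lt_two k).le
  have hnk : (2 : ℝ) ^ n ≤ 2 * k := by
    rw [pow_succ, mul_comm]
    exact_mod_cast Nat.mul_le_mul_left 2 (Nat.pow_log_le_self 2 hk.ne')
  have hL : 0 ≤ L := logb_nonneg one_lt_two (by simp only [le_add_iff_nonneg_left]; positivity)
  calc _ ≤ ∑ l ∈ range n, (2 ^ l * L + 2 ^ l * (n - l) + 2 * 2 ^ l) := by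
        refine sum_le_sum fun l hl => ?_
        have hlog := logb_add_two_pow_div_two_pow_le N.cast_nonneg hk0 hkn
          (mem_range.mp hl).le
        have := mul_le_mul_of_nonneg_left hlog (by positivity : (0 : ℝ) ≤ 2 ^ l)
        rw [pow_succ]
        linarith
    _ = (2 ^ n - 1) * L + (2 ^ (n + 1) - n - 2) + 2 * (2 ^ n - 1) := by
        rw [sum_add_distrib, sum_add_distrib, ← sum_mul, ← mul_sum,
          sum_range_two_pow_mul_sub, geom_sum_eq (by norm_num : (2 : ℝ) ≠ 1)]
        ring
    _ ≤ 2 * k * L + 8 * k := by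
        have := mul_le_mul_of_nonneg_right hnk hL
        rw [pow_succ (2 : ℝ) n]
        linarith [n.cast_nonneg (α := ℝ)]

/-- Efficient encoding size bound:
`∑_{l=0}^{⌊log₂ k⌋} (2^l · log₂((N + 2^l)/2^l) + 2^{l+1}) ≤ 2k·log₂(N/k + 1) + 8k`. -/
theorem stmt1 (N k : ℕ) (hk : 0 < k) (hkN : k ≤ N) :
    ∑ l ∈ Finset.range (Nat.log 2 k + 1),
        ((2 : ℝ) ^ l * Real.logb 2 (((N : ℝ) + 2 ^ l) / 2 ^ l) + 2 ^ (l + 1))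
      ≤ 2 * k * Real.logb 2 ((N : ℝ) / k + 1) + 8 * k :=
  stmt1_general N k hk
end

section
/- Let T : ℤ → ℝ≥0 satisfy T(s) ≤ p for all s ≤ 0 and T(s) ≤ max(2·T(s−3), T(s−2) + T(s−5)) for all s > 0, where p > 0 is a constant. Then T(s) ≤ C·2^{s/3}·p for all s ≥ 0, for some universal constant C. -/
/-!
Any `g` with `2 g(s-3) ≤ g s` and `g(s-2) + g(s-5) ≤ g s` that dominates `T` on the initial
window `-4 ≤ s ≤ 0` dominates `T` everywhere to the right of it, by strong induction.
For `x = 2^(1/3)` these two conditions on `g s = c x^s` read `2 ≤ x³` and `x³ + 1 ≤ x⁵`, i.e.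
`2 x⁻³ ≤ 1` and `x⁻² + x⁻⁵ ≤ 1`; the second holds because `(2x²)³ = 32 ≥ 27`.
Taking `c = x⁴ p` makes `g ≥ p` on the initial window.
-/

open Real

theorem le_of_le_max_recurrence {T g : ℤ → ℝ}
    (hbase : ∀ s, -4 ≤ s → s ≤ 0 → T s ≤ g s)
    (hT : ∀ s > 0, T s ≤ max (2 * T (s - 3)) (T (s - 2) + T (s - 5)))
    (hg : ∀ s > 0, max (2 * g (s - 3)) (g (s - 2) + g (s - 5)) ≤ g s) :
    ∀ s, -4 ≤ s → T s ≤ g s := by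
  intro s
  induction s using Int.strongRec (m := -4) with
  | lt s hs => intro h; omega
  | ge s _ ih =>
    intro hs
    rcases le_or_gt s 0 with hs0 | hs0
    · exact hbase s hs hs0
    calc T s ≤ max (2 * T (s - 3)) (T (s - 2) + T (s - 5)) := hT s hs0
      _ ≤ max (2 * g (s - 3)) (g (s - 2) + g (s - 5)) := by
        gcongr
        · exact ih _ (by omega) (by omega)
        · exact ih _ (by omega) (by omega)
        · exact ih _ (by omega) (by omega)
      _ ≤ g s := hg s hs0

theorem max_recurrence_zpow_le {x : ℝ} (hx : 0 < x) (h3 : 2 ≤ x ^ 3) (h5 : x ^ 3 + 1 ≤ x ^ 5)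
    {c : ℝ} (hc : 0 ≤ c) (s : ℤ) :
    max (2 * (c * x ^ (s - 3))) (c * x ^ (s - 2) + c * x ^ (s - 5)) ≤ c * x ^ s := by
  have shift : ∀ k : ℕ, x ^ (s - 5 + k) = x ^ (s - 5) * x ^ k := fun k => by
    rw [zpow_add₀ hx.ne', zpow_natCast]
  obtain ⟨e3, e2, e0⟩ : x ^ (s - 3) = x ^ (s - 5) * x ^ 2 ∧ x ^ (s - 2) = x ^ (s - 5) * x ^ 3 ∧
      x ^ s = x ^ (s - 5) * x ^ 5 := by
    refine ⟨?_, ?_, ?_⟩ <;> rw [← shift] <;> congr 1 <;> push_cast <;> ring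
  have hcy : 0 ≤ c * x ^ (s - 5) := mul_nonneg hc (zpow_pos hx _).le
  rw [e3, e2, e0]
  refine max_le ?_ ?_
  · calc 2 * (c * (x ^ (s - 5) * x ^ 2)) = c * x ^ (s - 5) * (2 * x ^ 2) := by ring
      _ ≤ c * x ^ (s - 5) * (x ^ 3 * x ^ 2) := by gcongr
      _ = c * (x ^ (s - 5) * x ^ 5) := by ring
  · calc c * (x ^ (s - 5) * x ^ 3) + c * x ^ (s - 5) = c * x ^ (s - 5) * (x ^ 3 + 1) := by ring
      _ ≤ c * (x ^ (s - 5) * x ^ 5) := by rw [← mul_assoc]; gcongr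

theorem cbrt_two_pow_three : ((2 : ℝ) ^ (3⁻¹ : ℝ)) ^ 3 = 2 :=
  mod_cast rpow_inv_natCast_pow (n := 3) (by norm_num) (by norm_num)

theorem cbrt_two_pow_three_add_one_le_pow_five :
    ((2 : ℝ) ^ (3⁻¹ : ℝ)) ^ 3 + 1 ≤ ((2 : ℝ) ^ (3⁻¹ : ℝ)) ^ 5 := by
  set x := (2 : ℝ) ^ (3⁻¹ : ℝ)
  have hx : 0 < x := by positivity
  have h3 : x ^ 3 = 2 := cbrt_two_pow_three
  have hsq : 3 ≤ 2 * x ^ 2 := by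
    by_contra! h
    have := pow_lt_pow_left₀ h (by positivity) (three_ne_zero)
    nlinarith
  nlinarith

theorem two_rpow_div_three (s : ℤ) : (2 : ℝ) ^ ((s : ℝ) / 3) = ((2 : ℝ) ^ (3⁻¹ : ℝ)) ^ s := by
  rw [← rpow_intCast, ← rpow_mul (by norm_num), div_eq_mul_inv, mul_comm]

/-- Eppstein recurrence: if `T s ≤ p` for `s ≤ 0` and
`T s ≤ max (2·T(s−3)) (T(s−2) + T(s−5))` for `s > 0`, then `T s ≤ C·2^(s/3)·p` for all
`s ≥ 0`, for a universal constant `C`. -/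
theorem stmt6 :
    ∃ C : ℝ, 0 < C ∧
      ∀ (T : ℤ → ℝ) (p : ℝ), 0 < p → (∀ s, 0 ≤ T s) → (∀ s ≤ 0, T s ≤ p) →
        (∀ s > 0, T s ≤ max (2 * T (s - 3)) (T (s - 2) + T (s - 5))) →
        ∀ s ≥ 0, T s ≤ C * (2 : ℝ) ^ ((s : ℝ) / 3) * p := by
  set x := (2 : ℝ) ^ (3⁻¹ : ℝ)
  have hx : 1 ≤ x := one_le_rpow (by norm_num) (by norm_num)
  refine ⟨x ^ 4, by positivity, fun T p hp _ hbase hT s hs => ?_⟩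
  have hwindow : ∀ s, -4 ≤ s → s ≤ 0 → T s ≤ x ^ 4 * p * x ^ s := fun s hs4 hs0 =>
    calc T s ≤ p * 1 := (hbase s hs0).trans_eq (mul_one p).symm
      _ ≤ p * x ^ (s + 4) := by gcongr; exact one_le_zpow₀ hx (by omega)
      _ = x ^ 4 * p * x ^ s := by rw [zpow_add₀ (by positivity), zpow_ofNat]; ring
  have hsuper := fun s (_ : s > 0) => max_recurrence_zpow_le (x := x) (c := x ^ 4 * p)
    (by positivity) cbrt_two_pow_three.ge cbrt_two_pow_three_add_one_le_pow_five
    (by positivity) s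
  rw [two_rpow_div_three, mul_right_comm]
  exact le_of_le_max_recurrence hwindow hT hsuper s (by omega)
end

section
/- Let T : ℤ → ℝ≥0 satisfy T(r) ≤ max(2·T(r−1), t²·2^Δ·T(r−Δ)) for r > 0 and T(r) ≤ p for r ≤ 0, where Δ ≥ 1 is an integer, t = 3Δ, and p > 0. Then T(r) ≤ C·(2·t^{2/Δ})^r·p for all r ≥ 0, for some constant C depending only on Δ. -/
/-!
With `b = 2·t^(2/Δ)` we have `2 ≤ b` and `b^Δ = t²·2^Δ`, so both branches of the recurrence
multiply the bound by at most `b` per unit of radius. By strong induction,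
`T r ≤ b^(r + Δ) · p` for every `r`: the shift by `Δ` absorbs the base case of the
`Δ`-branch, where `r - Δ` drops below `0`. Hence `C = b^Δ` works.
-/

theorem le_pow_toNat_add_mul_of_le_max {T : ℤ → ℝ} {a b p : ℝ} {Δ : ℕ} (hΔ : 1 ≤ Δ)
    (hb : 2 ≤ b) (ha : 0 ≤ a) (hab : a ≤ b ^ Δ) (hp : 0 ≤ p)
    (hbase : ∀ r ≤ 0, T r ≤ p)
    (hrec : ∀ r > 0, T r ≤ max (2 * T (r - 1)) (a * T (r - Δ))) (r : ℤ) :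
    T r ≤ b ^ (r + Δ).toNat * p := by
  induction r using Int.strongRec (m := 1) with
  | lt r hr =>
    calc T r ≤ 1 * p := by rw [one_mul]; exact hbase r (by omega)
      _ ≤ b ^ (r + Δ).toNat * p := by gcongr; exact one_le_pow₀ (by linarith)
  | ge r hr ih =>
    refine (hrec r hr).trans (max_le ?_ ?_)
    · have hsucc : (r + Δ).toNat = (r - 1 + Δ).toNat + 1 := by omega
      calc 2 * T (r - 1) ≤ 2 * (b ^ (r - 1 + Δ).toNat * p) := by gcongr; exact ih _ (by omega)
        _ ≤ b * (b ^ (r - 1 + Δ).toNat * p) := by gcongr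
        _ = b ^ (r + Δ).toNat * p := by rw [hsucc, pow_succ]; ring
    · have hshift : (r + Δ).toNat = (r - Δ + Δ).toNat + Δ := by omega
      calc a * T (r - Δ) ≤ a * (b ^ (r - Δ + Δ).toNat * p) := by gcongr; exact ih _ (by omega)
        _ ≤ b ^ Δ * (b ^ (r - Δ + Δ).toNat * p) := by gcongr
        _ = b ^ (r + Δ).toNat * p := by rw [hshift, pow_add]; ring

theorem two_mul_rpow_div_pow {x : ℝ} (hx : 0 ≤ x) (k : ℝ) {Δ : ℕ} (hΔ : Δ ≠ 0) :
    (2 * x ^ (k / Δ)) ^ Δ = 2 ^ Δ * x ^ k := by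
  rw [mul_pow, ← Real.rpow_natCast (x ^ _), ← Real.rpow_mul hx,
    div_mul_cancel₀ _ (Nat.cast_ne_zero.mpr hΔ)]

/-- Schöning/Moser recurrence: with `t = 3Δ`, if `T r ≤ p` for `r ≤ 0` and
`T r ≤ max (2·T(r−1)) (t²·2^Δ·T(r−Δ))` for `r > 0`, then
`T r ≤ C·(2·t^(2/Δ))^r·p` for all `r ≥ 0`, with `C` depending only on `Δ`. -/
theorem stmt8 (Δ : ℕ) (hΔ : 1 ≤ Δ) :
    ∃ C : ℝ, 0 < C ∧
      ∀ (T : ℤ → ℝ) (p : ℝ), 0 < p → (∀ r, 0 ≤ T r) → (∀ r ≤ 0, T r ≤ p) →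
        (∀ r > 0, T r ≤ max (2 * T (r - 1))
          ((3 * (Δ : ℝ)) ^ 2 * 2 ^ Δ * T (r - (Δ : ℤ)))) →
        ∀ r ≥ 0, T r ≤ C * (2 * (3 * (Δ : ℝ)) ^ (2 / (Δ : ℝ))) ^ ((r : ℤ) : ℝ) * p := by
  set b : ℝ := 2 * (3 * (Δ : ℝ)) ^ (2 / (Δ : ℝ))
  have ht : (1 : ℝ) ≤ 3 * Δ := by
    have : (1 : ℝ) ≤ Δ := by exact_mod_cast hΔ
    linarith
  have hb : 2 ≤ b := by nlinarith [Real.one_le_rpow ht (by positivity : (0 : ℝ) ≤ 2 / Δ)]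
  have hbΔ : b ^ Δ = (3 * (Δ : ℝ)) ^ 2 * 2 ^ Δ := by
    rw [two_mul_rpow_div_pow (by linarith) 2 (by omega), Real.rpow_two, mul_comm]
  refine ⟨b ^ Δ, by positivity, fun T p hp _ hbase hrec r hr => ?_⟩
  lift r to ℕ using hr
  have hbound := le_pow_toNat_add_mul_of_le_max hΔ hb (by positivity) hbΔ.ge hp.le hbase
    (by simpa only [hbΔ] using hrec) r
  rw [show ((r : ℤ) + Δ).toNat = Δ + r by omega, pow_add] at hbound
  rwa [Int.cast_natCast, Real.rpow_natCast]
end
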